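/- Let U, H be separable Hilbert spaces and σ : ℝ_+ × B → L₂(U, H) a measurable, (B_t(B))-adapted Hilbert–Schmidt-operator-valued process on a filtered measurable path space B. For (t, y) ∈ ℝ_+ × B define ψ(t,y) ∈ L(U) as the orthogonal projection onto ker σ(t,y) and φ(t,y) := id_U − ψ(t,y) the orthogonal projection onto (ker σ(t,y))^⊥. Then for each fixed u ∈ U, the U-valued map (t, y) ↦ ψ(t, y)(u) is jointly measurable and adapted; i.e., ψ and φ are measurable and adapted with respect to the strong Borel σ-algebra on L(U). -/

import Mathlib

/-!
The kernel of `A = σ(t,y)` is the orthogonal complement of the span of the vectors `A†A eₖ`,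
where `(eₖ)` is the Hilbert basis of `U`; these vectors depend measurably on the parameter since
their coordinates `⟪eⱼ, A†A eₖ⟫ = ⟪A eⱼ, A eₖ⟫` do. The projection onto the closed span of a
measurable sequence `(vₖ)` is the pointwise limit of the projections onto `span {v₀, …, vₙ₋₁}`,
and these are measurable by induction on `n`, adding one Gram–Schmidt vector at a time.
-/

open MeasureTheory
open scoped RealInnerProductSpace InnerProduct
open Submodule ContinuousLinearMap

section Projection

variable {E : Type*} [NormedAddCommGroup E] [InnerProductSpace ℝ E]

theorem Submodule.starProjection_sup_span_singleton (K : Submodule ℝ E) (x y : E)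
    [K.HasOrthogonalProjection] [(K ⊔ ℝ ∙ x).HasOrthogonalProjection] :
    (K ⊔ ℝ ∙ x).starProjection y =
      K.starProjection y + (ℝ ∙ (x - K.starProjection x)).starProjection y := by
  set x' := x - K.starProjection x
  have hx'_orth : ℝ ∙ x' ≤ Kᗮ :=
    (span_singleton_le_iff_mem _ _).mpr (sub_starProjection_mem_orthogonal x)
  have hx'_le : ℝ ∙ x' ≤ K ⊔ ℝ ∙ x := (span_singleton_le_iff_mem _ _).mpr <|
    sub_mem (mem_sup_right (mem_span_singleton_self x)) (mem_sup_left (starProjection_apply_mem _ _))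
  have hle : K ⊔ ℝ ∙ x ≤ K ⊔ ℝ ∙ x' := by
    refine sup_le le_sup_left ((span_singleton_le_iff_mem _ _).mpr ?_)
    rw [show x = K.starProjection x + x' by simp [x']]
    exact add_mem_sup (starProjection_apply_mem _ _) (mem_span_singleton_self x')
  refine eq_starProjection_of_mem_of_inner_eq_zero
    (add_mem (mem_sup_left (starProjection_apply_mem _ _))
      (hx'_le (starProjection_apply_mem _ _))) fun w hw => ?_
  obtain ⟨k, hk, z, hz, rfl⟩ := mem_sup.mp (hle hw)
  have h₁ := (K.starProjection_inner_eq_zero y) k hk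
  have h₂ := ((ℝ ∙ x').starProjection_inner_eq_zero y) z hz
  have h₃ : ⟪(ℝ ∙ x').starProjection y, k⟫ = 0 :=
    inner_left_of_mem_orthogonal hk (hx'_orth (starProjection_apply_mem _ _))
  have h₄ : ⟪K.starProjection y, z⟫ = 0 :=
    inner_right_of_mem_orthogonal (starProjection_apply_mem _ _) (hx'_orth hz)
  simp only [inner_sub_left, inner_add_left, inner_add_right] at h₁ h₂ ⊢
  linarith

theorem HilbertBasis.eq_zero_of_forall_inner_eq_zero {ι : Type*} (b : HilbertBasis ι ℝ E) {x : E}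
    (hx : ∀ i, ⟪b i, x⟫ = 0) : x = 0 := by
  refine b.repr.map_eq_zero_iff.mp (lp.ext (funext fun i => ?_))
  simp [b.repr_apply_apply, hx i]

end Projection

section Measurability

variable {Ω E : Type*} [MeasurableSpace Ω] [NormedAddCommGroup E] [InnerProductSpace ℝ E]
  [MeasurableSpace E] [BorelSpace E] [SecondCountableTopology E]

theorem measurable_starProjection_finset_range_sup (v : ℕ → Ω → E) (hv : ∀ i, Measurable (v i))
    (n : ℕ) {w : Ω → E} (hw : Measurable w) :
    Measurable fun ω => ((Finset.range n).sup fun i => ℝ ∙ v i ω).starProjection (w ω) := by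
  induction n generalizing w with
  | zero => simp
  | succ n ih =>
    simp_rw [Finset.range_add_one, Finset.sup_insert, sup_comm (a := ℝ ∙ v n _),
      starProjection_sup_span_singleton, starProjection_singleton]
    have hx := (hv n).sub (ih (hv n))
    exact (ih hw).add (((hx.inner hw).div (hx.norm.pow_const 2)).smul hx)

theorem measurable_starProjection_closure_span_range [CompleteSpace E] (v : ℕ → Ω → E)
    (hv : ∀ i, Measurable (v i)) (u : E) :
    Measurable fun ω => (span ℝ (Set.range (v · ω))).topologicalClosure.starProjection u := by
  set V : ℕ → Ω → Submodule ℝ E := fun n ω => (Finset.range n).sup fun i => ℝ ∙ v i ω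
  have hV : ∀ ω, ⨆ n, V n ω = span ℝ (Set.range (v · ω)) := fun ω => by
    refine le_antisymm (iSup_le fun n => Finset.sup_le fun i _ => ?_) ?_
    · exact span_mono (Set.singleton_subset_iff.mpr (Set.mem_range_self i))
    · rw [span_range_eq_iSup]
      exact iSup_le fun i => le_iSup_of_le (i + 1)
        (Finset.le_sup (f := fun i => ℝ ∙ v i ω) (Finset.self_mem_range_succ i))
  refine measurable_of_tendsto_metrizable
    (fun n => measurable_starProjection_finset_range_sup v hv n (measurable_const (a := u)))
    (tendsto_pi_nhds.mpr fun ω => ?_)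
  rw [← hV ω]
  exact starProjection_tendsto_closure_iSup (V · ω)
    (fun m n hmn => Finset.sup_mono (Finset.range_mono hmn)) u

theorem HilbertBasis.measurable_of_measurable_inner (b : HilbertBasis ℕ ℝ E) {f : Ω → E}
    (hf : ∀ i, Measurable fun ω => ⟪b i, f ω⟫) : Measurable f := by
  refine measurable_of_tendsto_metrizable
    (fun n => Finset.measurable_sum (Finset.range n) fun i _ => (hf i).smul_const (b i))
    (tendsto_pi_nhds.mpr fun ω => ?_)
  simpa [b.repr_apply_apply] using (b.hasSum_repr (f ω)).tendsto_sum_nat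

end Measurability

section Kernel

variable {Ω U H : Type*} [mΩ : MeasurableSpace Ω]
  [NormedAddCommGroup U] [InnerProductSpace ℝ U] [CompleteSpace U]
  [NormedAddCommGroup H] [InnerProductSpace ℝ H] [CompleteSpace H]

theorem orthogonal_span_adjoint_comp_self_eq_ker {ι : Type*} (A : U →L[ℝ] H)
    (b : HilbertBasis ι ℝ U) :
    (span ℝ (Set.range fun i => (A† ∘L A) (b i)))ᗮ = A.ker := by
  refine le_antisymm (fun w hw => ?_) fun w hw => ?_
  · rw [← ker_adjoint_comp_self]
    refine b.eq_zero_of_forall_inner_eq_zero fun i => ?_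
    have := inner_right_of_mem_orthogonal (subset_span (Set.mem_range_self i)) hw
    simpa [adjoint_inner_left, adjoint_inner_right] using this
  · have h : span ℝ (Set.range fun i => (A† ∘L A) (b i)) ≤ A.kerᗮ := by
      rw [span_le]
      rintro _ ⟨i, rfl⟩ v hv
      simp_all [adjoint_inner_right]
    exact orthogonal_le h (le_orthogonal_orthogonal _ hw)

variable [MeasurableSpace U] [BorelSpace U] [SecondCountableTopology U]
  [MeasurableSpace H] [BorelSpace H] [SecondCountableTopology H]

theorem measurable_starProjection_ker (A : Ω → U →L[ℝ] H) (b : HilbertBasis ℕ ℝ U)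
    (hA : ∀ u, Measurable fun ω => A ω u) (u : U) :
    Measurable fun ω => (A ω).ker.starProjection u := by
  have hv : ∀ i, Measurable fun ω => (A ω† ∘L A ω) (b i) := fun i =>
    b.measurable_of_measurable_inner fun j => by
      simpa [adjoint_inner_right] using (hA (b j)).inner (hA (b i))
  have hker : ∀ ω, (A ω).ker.starProjection u =
      u - (span ℝ (Set.range fun i => (A ω† ∘L A ω) (b i))).topologicalClosure.starProjection u :=
    fun ω => by
      set S := span ℝ (Set.range fun i => (A ω† ∘L A ω) (b i))
      have hS : S.topologicalClosure = (A ω).kerᗮ := by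
        rw [← orthogonal_orthogonal_eq_closure, orthogonal_span_adjoint_comp_self_eq_ker]
      rw [eq_starProjection_of_mem_orthogonal (K := S.topologicalClosure)
        (v := u - (A ω).ker.starProjection u), sub_sub_cancel]
      · rw [hS]
        exact sub_starProjection_mem_orthogonal u
      · rw [sub_sub_cancel, hS, orthogonal_orthogonal]
        exact starProjection_apply_mem _ _
  simp_rw [hker]
  exact measurable_const.sub (measurable_starProjection_closure_span_range _ hv u)

end Kernel

theorem kernel_projection_measurable_adapted_general
    {U H B : Type*}
    [NormedAddCommGroup U] [InnerProductSpace ℝ U] [CompleteSpace U] [SecondCountableTopology U]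
    [MeasurableSpace U] [BorelSpace U]
    [NormedAddCommGroup H] [InnerProductSpace ℝ H] [CompleteSpace H] [SecondCountableTopology H]
    [MeasurableSpace H] [BorelSpace H]
    [mB : MeasurableSpace B]
    (𝓑 : ℝ → MeasurableSpace B)
    (σ : ℝ → B → U →L[ℝ] H)
    (bU : HilbertBasis ℕ ℝ U)
    (hmeas : ∀ u : U, Measurable fun p : ℝ × B => σ p.1 p.2 u)
    (hadapt : ∀ (t : ℝ) (u : U), Measurable[𝓑 t] fun y => σ t y u)
    (ψ φ : ℝ → B → U →L[ℝ] U)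
    -- `ψ(t,y)` is the orthogonal projection onto `ker σ(t,y)`
    (hψker : ∀ t y u, σ t y (ψ t y u) = 0)
    (hψorth : ∀ t y u v, σ t y v = 0 → ⟪u - ψ t y u, v⟫ = 0)
    -- `φ(t,y)` is the orthogonal projection onto `(ker σ(t,y))ᗮ`
    (hφ : ∀ t y, φ t y = ContinuousLinearMap.id ℝ U - ψ t y) :
    (∀ u : U, Measurable fun p : ℝ × B => ψ p.1 p.2 u) ∧
    (∀ (u : U) (t : ℝ), Measurable[𝓑 t] fun y => ψ t y u) ∧
    (∀ u : U, Measurable fun p : ℝ × B => φ p.1 p.2 u) ∧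
    (∀ (u : U) (t : ℝ), Measurable[𝓑 t] fun y => φ t y u) := by
  have hψ : ∀ t y u, ψ t y u = (σ t y).ker.starProjection u := fun t y u =>
    (eq_starProjection_of_mem_of_inner_eq_zero (hψker t y u) (hψorth t y u)).symm
  have hφψ : ∀ t y u, φ t y u = u - ψ t y u := by simp [hφ]
  have hjoint : ∀ u, Measurable fun p : ℝ × B => ψ p.1 p.2 u := fun u => by
    simp only [hψ]
    exact measurable_starProjection_ker (fun p : ℝ × B => σ p.1 p.2) bU hmeas u
  have hadapted : ∀ u t, Measurable[𝓑 t] fun y => ψ t y u := fun u t => by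
    simp only [hψ]
    exact measurable_starProjection_ker (mΩ := 𝓑 t) (σ t) bU (hadapt t) u
  refine ⟨hjoint, hadapted, fun u => ?_, fun u t => ?_⟩
  · simp only [hφψ]
    exact measurable_const.sub (hjoint u)
  · simp only [hφψ]
    exact measurable_const.sub (m := 𝓑 t) (hadapted u t)

/-- For a measurable, adapted Hilbert–Schmidt-operator-valued process `σ(t,y)` on a Polish
path space `B`, the orthogonal projections `ψ(t,y)` onto `ker σ(t,y)` and
`φ(t,y) = id − ψ(t,y)` onto `(ker σ(t,y))ᗮ` are (strongly) measurable and adapted: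
for every `u ∈ U`, the map `(t,y) ↦ ψ(t,y)u` is jointly measurable and
`y ↦ ψ(t,y)u` is `𝓑_t`-measurable for each `t` (and likewise for `φ`). -/
theorem kernel_projection_measurable_adapted
    {U H B : Type*}
    [NormedAddCommGroup U] [InnerProductSpace ℝ U] [CompleteSpace U] [SecondCountableTopology U]
    [MeasurableSpace U] [BorelSpace U]
    [NormedAddCommGroup H] [InnerProductSpace ℝ H] [CompleteSpace H] [SecondCountableTopology H]
    [MeasurableSpace H] [BorelSpace H]
    [TopologicalSpace B] [PolishSpace B] [mB : MeasurableSpace B] [BorelSpace B]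
    (𝓑 : ℝ → MeasurableSpace B) (h𝓑 : ∀ t, 𝓑 t ≤ mB) (hmono : Monotone 𝓑)
    (σ : ℝ → B → U →L[ℝ] H)
    (bU : HilbertBasis ℕ ℝ U)
    (hHS : ∀ t y, Summable fun k => ‖σ t y (bU k)‖ ^ 2)
    (hmeas : ∀ u : U, Measurable fun p : ℝ × B => σ p.1 p.2 u)
    (hadapt : ∀ (t : ℝ) (u : U), Measurable[𝓑 t] fun y => σ t y u)
    (ψ φ : ℝ → B → U →L[ℝ] U)
    -- `ψ(t,y)` is the orthogonal projection onto `ker σ(t,y)`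
    (hψker : ∀ t y u, σ t y (ψ t y u) = 0)
    (hψorth : ∀ t y u v, σ t y v = 0 → ⟪u - ψ t y u, v⟫ = 0)
    -- `φ(t,y)` is the orthogonal projection onto `(ker σ(t,y))ᗮ`
    (hφ : ∀ t y, φ t y = ContinuousLinearMap.id ℝ U - ψ t y) :
    (∀ u : U, Measurable fun p : ℝ × B => ψ p.1 p.2 u) ∧
    (∀ (u : U) (t : ℝ), Measurable[𝓑 t] fun y => ψ t y u) ∧
    (∀ u : U, Measurable fun p : ℝ × B => φ p.1 p.2 u) ∧
    (∀ (u : U) (t : ℝ), Measurable[𝓑 t] fun y => φ t y u) :=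
  kernel_projection_measurable_adapted_general (mB := mB) 𝓑 σ bU hmeas hadapt ψ φ hψker hψorth hφ
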